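/- arXiv:2307.03288 — 7 statements merged into one kernel-verified Lean document; each statement's English description precedes it below -/
import Mathlib

section
/- Let Y ⊆ ℝ^k be a set contained in the positive orthant and let y* be a Pareto-optimal point of Y (no z ∈ Y satisfies z ≥ y* componentwise with strict inequality in some coordinate). Then there exists a weight vector λ > 0 (componentwise) such that y* maximizes the hypervolume scalarization s_λ(y) = min_i (y_i/λ_i)^k over y ∈ Y. In particular, one may take λ = y*/‖y*‖. -/
/-!
On the ray through `y*` with direction `λ = y* / c` every ratio `y*_i / λ_i` equals `c`, so
`s_λ(y*) = c ^ k`. A point `y ≠ y*` of `Y` cannot satisfy `y ≥ y*` without dominating `y*`, so some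
coordinate has `y_i < y*_i = c λ_i`, and the minimum defining `s_λ(y)` is at most `c ^ k`.
-/

/-- The hypervolume scalarization `s_λ(y) = min_i (y_i / λ_i)^k`. -/
noncomputable def sHV (k : ℕ) (lam y : Fin k → ℝ) : ℝ := ⨅ i, (y i / lam i) ^ k

/-- A point is Pareto-dominated by `z` if `z ≥ y` componentwise with some strict coordinate. -/
def Dominates {k : ℕ} (z y : Fin k → ℝ) : Prop := (∀ i, y i ≤ z i) ∧ ∃ j, y j < z j

lemma Dominates.eq_or_exists_lt_of_not {k : ℕ} {z y : Fin k → ℝ} (h : ¬ Dominates z y) :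
    z = y ∨ ∃ i, z i < y i := by
  by_cases hle : ∀ i, y i ≤ z i
  · have hge : ∀ j, z j ≤ y j := by simpa [Dominates, hle] using h
    exact Or.inl (funext fun i => le_antisymm (hge i) (hle i))
  · push Not at hle
    exact Or.inr hle

lemma sHV_eq_pow_of_div_eq {k : ℕ} [Nonempty (Fin k)] {lam y : Fin k → ℝ} {c : ℝ}
    (h : ∀ i, y i / lam i = c) : sHV k lam y = c ^ k := by
  simp only [sHV, h, ciInf_const]

lemma sHV_le_pow_of_le_mul {k : ℕ} {lam y : Fin k → ℝ} {c : ℝ} (i : Fin k) (hlam : 0 < lam i)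
    (hy : 0 ≤ y i) (hi : y i ≤ c * lam i) : sHV k lam y ≤ c ^ k := by
  have hdiv : y i / lam i ≤ c := (div_le_iff₀ hlam).mpr hi
  calc sHV k lam y ≤ (y i / lam i) ^ k := ciInf_le (Set.finite_range _).bddBelow i
    _ ≤ c ^ k := pow_le_pow_left₀ (div_nonneg hy hlam.le) hdiv k

lemma sHV_le_sHV_div_of_le {k : ℕ} {y ystar : Fin k → ℝ} {c : ℝ} (hc : 0 < c)
    (hystar : ∀ j, 0 < ystar j) (i : Fin k) (hy : 0 ≤ y i) (hi : y i ≤ ystar i) :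
    sHV k (fun j => ystar j / c) y ≤ sHV k (fun j => ystar j / c) ystar := by
  have : Nonempty (Fin k) := ⟨i⟩
  rw [sHV_eq_pow_of_div_eq fun j => div_div_cancel₀ (hystar j).ne']
  refine sHV_le_pow_of_le_mul i (div_pos (hystar i) hc) hy ?_
  rwa [mul_div_cancel₀ _ hc.ne']

lemma sqrt_sum_sq_pos {ι : Type*} [Fintype ι] {x : ι → ℝ} (i : ι) (hx : x i ≠ 0) :
    0 < Real.sqrt (∑ j, x j ^ 2) :=
  Real.sqrt_pos.mpr <|
    Finset.sum_pos' (fun j _ => sq_nonneg (x j)) ⟨i, Finset.mem_univ i, sq_pos_of_ne_zero hx⟩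

theorem stmt_0_general {k : ℕ} (Y : Set (Fin k → ℝ))
    (hpos : ∀ y ∈ Y, ∀ i, 0 < y i)
    (ystar : Fin k → ℝ) (hmem : ystar ∈ Y)
    (hpareto : ¬ ∃ z ∈ Y, Dominates z ystar) :
    ∃ lam : Fin k → ℝ, (∀ i, 0 < lam i) ∧
      (∀ y ∈ Y, sHV k lam y ≤ sHV k lam ystar) ∧
      lam = fun i => ystar i / Real.sqrt (∑ j, (ystar j) ^ 2) := by
  have hystar := hpos ystar hmem
  have hnorm (i : Fin k) := sqrt_sum_sq_pos i (hystar i).ne'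
  refine ⟨_, fun i => div_pos (hystar i) (hnorm i), fun y hy => ?_, rfl⟩
  rcases Dominates.eq_or_exists_lt_of_not fun h => hpareto ⟨y, hy, h⟩ with rfl | ⟨i, hi⟩
  · exact le_rfl
  · exact sHV_le_sHV_div_of_le (hnorm i) hystar i (hpos y hy i).le hi.le

theorem stmt_0 {k : ℕ} (hk : 0 < k) (Y : Set (Fin k → ℝ))
    (hpos : ∀ y ∈ Y, ∀ i, 0 < y i)
    (ystar : Fin k → ℝ) (hmem : ystar ∈ Y)
    (hpareto : ¬ ∃ z ∈ Y, Dominates z ystar) :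
    ∃ lam : Fin k → ℝ, (∀ i, 0 < lam i) ∧
      (∀ y ∈ Y, sHV k lam y ≤ sHV k lam ystar) ∧
      lam = fun i => ystar i / Real.sqrt (∑ j, (ystar j) ^ 2) :=
  stmt_0_general Y hpos ystar hmem hpareto
end

section
/- Let Y ⊆ ℝ^k lie in the positive orthant and let λ > 0 and α > 0 be such that αλ ∈ Y is Pareto-optimal in Y. Then αλ is a maximizer of the hypervolume scalarization s_λ(y) = min_i (y_i/λ_i)^k over y ∈ Y; i.e., for every y ∈ Y, min_i (y_i/λ_i)^k ≤ α^k. -/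
theorem stmt_1 {k : ℕ} (hk : 0 < k) (Y : Set (Fin k → ℝ))
    (hpos : ∀ y ∈ Y, ∀ i, 0 < y i)
    (lam : Fin k → ℝ) (hlam : ∀ i, 0 < lam i)
    (α : ℝ) (hα : 0 < α)
    (hmem : (α • lam) ∈ Y)
    (hpareto : ¬ ∃ z ∈ Y, Dominates z (α • lam)) :
    (∀ y ∈ Y, sHV k lam y ≤ α ^ k) ∧
      ∀ y ∈ Y, sHV k lam y ≤ sHV k lam (α • lam) := by
  haveI : Nonempty (Fin k) := ⟨⟨0, hk⟩⟩
  have hmain : ∀ y ∈ Y, sHV k lam y ≤ α ^ k := by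
    intro y hy
    have hex : ∃ i, y i ≤ α * lam i := by
      by_contra h
      push_neg at h
      exact hpareto ⟨y, hy, fun i => (h i).le, ⟨⟨0, hk⟩, h _⟩⟩
    obtain ⟨i, hi⟩ := hex
    have hle : (y i / lam i) ^ k ≤ α ^ k := by
      apply pow_le_pow_left₀ (div_nonneg (hpos y hy i).le (hlam i).le)
      rw [div_le_iff₀ (hlam i)]
      exact hi
    refine le_trans (ciInf_le ?_ i) hle
    exact Set.Finite.bddBelow (Set.finite_range _)
  refine ⟨hmain, fun y hy => ?_⟩
  have heq : sHV k lam (α • lam) = α ^ k := by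
    unfold sHV
    have : (fun i => ((α • lam) i / lam i) ^ k) = fun _ => α ^ k := by
      funext i
      simp [Pi.smul_apply, smul_eq_mul, mul_div_assoc,
        div_self (hlam i).ne']
    rw [this]
    exact ciInf_const
  rw [heq]
  exact hmain y hy
end

section
/- Let Y ⊆ ℝ^k be a set in the positive orthant and y* ∈ Y a Pareto-optimal point. Then there exists λ > 0 componentwise such that y* maximizes the Chebyshev scalarization s_λ(y) = min_i λ_i y_i over y ∈ Y. -/
/-- The Chebyshev scalarization `s_λ(y) = min_i λ_i y_i`. -/
noncomputable def sCS (k : ℕ) (lam y : Fin k → ℝ) : ℝ := ⨅ i, lam i * y i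

theorem stmt_2 {k : ℕ} (hk : 0 < k) (Y : Set (Fin k → ℝ))
    (hpos : ∀ y ∈ Y, ∀ i, 0 < y i)
    (ystar : Fin k → ℝ) (hmem : ystar ∈ Y)
    (hpareto : ¬ ∃ z ∈ Y, Dominates z ystar) :
    ∃ lam : Fin k → ℝ, (∀ i, 0 < lam i) ∧
      ∀ y ∈ Y, sCS k lam y ≤ sCS k lam ystar := by
  haveI : Nonempty (Fin k) := ⟨⟨0, hk⟩⟩
  refine ⟨fun i => (ystar i)⁻¹, fun i => inv_pos.2 (hpos ystar hmem i), ?_⟩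
  have hstar : sCS k (fun i => (ystar i)⁻¹) ystar = 1 := by
    have : ∀ i, (ystar i)⁻¹ * ystar i = 1 := fun i =>
      inv_mul_cancel₀ (ne_of_gt (hpos ystar hmem i))
    simp [sCS, this]
  intro y hy
  rw [hstar]
  by_contra h
  push_neg at h
  apply hpareto
  refine ⟨y, hy, ?_, ?_⟩
  · intro i
    have hle : sCS k (fun i => (ystar i)⁻¹) y ≤ (ystar i)⁻¹ * y i :=
      ciInf_le (Set.Finite.bddBelow (Set.finite_range _)) i
    have h1 : 1 < (ystar i)⁻¹ * y i := lt_of_lt_of_le h hle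
    have h2 : ystar i < y i := by
      have hxi := hpos ystar hmem i
      have := mul_lt_mul_of_pos_left h1 hxi
      rw [← mul_assoc, mul_inv_cancel₀ (ne_of_gt hxi)] at this
      linarith
    linarith
  · obtain ⟨i⟩ := ‹Nonempty (Fin k)›
    have hle : sCS k (fun i => (ystar i)⁻¹) y ≤ (ystar i)⁻¹ * y i :=
      ciInf_le (Set.Finite.bddBelow (Set.finite_range _)) i
    have h1 : 1 < (ystar i)⁻¹ * y i := lt_of_lt_of_le h hle
    refine ⟨i, ?_⟩
    have hxi := hpos ystar hmem i
    have := mul_lt_mul_of_pos_left h1 hxi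
    rw [← mul_assoc, mul_inv_cancel₀ (ne_of_gt hxi)] at this
    linarith
end

section
/- In dimension k = 2, for any compact Y in the positive orthant, the distribution of the maximizer argmax_{y ∈ Y} min(y_1/λ_1, y_2/λ_2) where λ is uniform on the positive quarter-circle {λ : ‖λ‖ = 1, λ > 0} equals the distribution of argmax_{y ∈ Y} min(μ_1 y_1, μ_2 y_2) where μ is uniform on the same quarter-circle. Equivalently, if (|X_1|, |X_2|)/R with R = √(X_1² + X_2²) and X_1, X_2 i.i.d. standard Gaussians is the weight, then the Chebyshev-scalarization maximizer and the hypervolume-scalarization maximizer have the same law. -/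
open MeasureTheory Real

/-- Uniform probability measure on the angles `(0, π/2)` parametrizing the
positive quarter-circle `{λ : ‖λ‖ = 1, λ > 0}` via `λ = (cos θ, sin θ)`. -/
noncomputable def unifAngle : Measure ℝ :=
  (ENNReal.ofReal (π / 2))⁻¹ • volume.restrict (Set.Ioo 0 (π / 2))

/-- For positive data, the hypervolume scalarization is a squared, rescaled Chebyshev
scalarization with swapped weights. -/
lemma hv_eq_cs_sq {s c x y : ℝ} (hs : 0 < s) (hc : 0 < c) (hx : 0 < x) (hy : 0 < y) :
    min ((x / c) ^ 2) ((y / s) ^ 2) = (min (s * x) (c * y) / (s * c)) ^ 2 := by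
  have h1 : min (s * x) (c * y) / (s * c) = min (x / c) (y / s) := by
    rw [← min_div_div_right (by positivity : (0:ℝ) ≤ s * c)]
    congr 1 <;> field_simp <;> ring
  rw [h1]
  rcases le_total (x / c) (y / s) with h | h
  · rw [min_eq_left h, min_eq_left (pow_le_pow_left₀ (by positivity) h 2)]
  · rw [min_eq_right h, min_eq_right (pow_le_pow_left₀ (by positivity) h 2)]

theorem stmt_5 (K : Set (Fin 2 → ℝ)) (hKcomp : IsCompact K)
    (hKpos : ∀ y ∈ K, ∀ i, 0 < y i)
    (mCS mHV : ℝ → (Fin 2 → ℝ)) (hmCS : Measurable mCS) (hmHV : Measurable mHV)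
    -- `mCS θ` is the a.s.-unique maximizer of the Chebyshev scalarization
    -- `min (cos θ * y₁) (sin θ * y₂)` over `K`:
    (hCSmax : ∀ θ ∈ Set.Ioo 0 (π / 2), mCS θ ∈ K ∧
      ∀ y ∈ K, y ≠ mCS θ →
        min (Real.cos θ * y 0) (Real.sin θ * y 1) <
          min (Real.cos θ * mCS θ 0) (Real.sin θ * mCS θ 1))
    -- `mHV θ` is the a.s.-unique maximizer of the hypervolume scalarization
    -- `min ((y₁/cos θ)², (y₂/sin θ)²)` over `K`:
    (hHVmax : ∀ θ ∈ Set.Ioo 0 (π / 2), mHV θ ∈ K ∧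
      ∀ y ∈ K, y ≠ mHV θ →
        min ((y 0 / Real.cos θ) ^ 2) ((y 1 / Real.sin θ) ^ 2) <
          min ((mHV θ 0 / Real.cos θ) ^ 2) ((mHV θ 1 / Real.sin θ) ^ 2)) :
    Measure.map mCS unifAngle = Measure.map mHV unifAngle := by
  have hπ : (0:ℝ) < π / 2 := by positivity
  -- the reflection θ ↦ π/2 - θ
  set f : ℝ → ℝ := fun θ => π / 2 - θ with hf
  have hfmeas : Measurable f := (measurable_const.sub measurable_id)
  have hfpre : f ⁻¹' Set.Ioo 0 (π / 2) = Set.Ioo 0 (π / 2) := by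
    ext x
    simp only [hf, Set.mem_preimage, Set.mem_Ioo, sub_pos, sub_lt_self_iff]
    constructor <;> rintro ⟨h1, h2⟩ <;> constructor <;> linarith
  -- pointwise identification: mHV θ = mCS (π/2 - θ) on the interval
  have key : ∀ θ ∈ Set.Ioo 0 (π / 2), mHV θ = mCS (f θ) := by
    intro θ hθ
    have hθ' : f θ ∈ Set.Ioo 0 (π / 2) := by
      simp only [hf, Set.mem_Ioo]
      constructor <;> [linarith [hθ.2]; linarith [hθ.1]]
    have hcos : Real.cos (f θ) = Real.sin θ := by simp [hf, Real.cos_pi_div_two_sub]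
    have hsin : Real.sin (f θ) = Real.cos θ := by simp [hf, Real.sin_pi_div_two_sub]
    obtain ⟨haK, haMax⟩ := hCSmax (f θ) hθ'
    obtain ⟨hbK, hbMax⟩ := hHVmax θ hθ
    by_contra hne
    have hs : 0 < Real.sin θ := Real.sin_pos_of_pos_of_lt_pi hθ.1 (by linarith [pi_pos, hθ.2, hθ.1])
    have hc : 0 < Real.cos θ := Real.cos_pos_of_mem_Ioo ⟨by linarith [hθ.1, pi_pos], hθ.2⟩
    set a := mCS (f θ)
    set b := mHV θ
    have ha0 := hKpos a haK 0
    have ha1 := hKpos a haK 1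
    have hb0 := hKpos b hbK 0
    have hb1 := hKpos b hbK 1
    -- Chebyshev strict inequality at b
    have h1 : min (Real.sin θ * b 0) (Real.cos θ * b 1) <
        min (Real.sin θ * a 0) (Real.cos θ * a 1) := by
      have := haMax b hbK hne
      rwa [hcos, hsin] at this
    -- hypervolume strict inequality at a
    have h2 : min ((a 0 / Real.cos θ) ^ 2) ((a 1 / Real.sin θ) ^ 2) <
        min ((b 0 / Real.cos θ) ^ 2) ((b 1 / Real.sin θ) ^ 2) :=
      hbMax a haK (fun h => hne h.symm)
    rw [hv_eq_cs_sq hs hc ha0 ha1, hv_eq_cs_sq hs hc hb0 hb1] at h2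
    set A := min (Real.sin θ * a 0) (Real.cos θ * a 1) with hA
    set B := min (Real.sin θ * b 0) (Real.cos θ * b 1) with hB
    have hApos : 0 < A := lt_min (by positivity) (by positivity)
    have hBpos : 0 < B := lt_min (by positivity) (by positivity)
    have hsc : 0 < Real.sin θ * Real.cos θ := by positivity
    -- from h2 : (A/(sc))^2 < (B/(sc))^2, deduce A < B, contradicting h1 : B < A
    have hAB : A / (Real.sin θ * Real.cos θ) < B / (Real.sin θ * Real.cos θ) := by
      by_contra hle
      push_neg at hle
      exact absurd h2 (not_lt.2 (pow_le_pow_left₀ (by positivity) hle 2))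
    have : A < B := by
      have := (div_lt_div_iff_of_pos_right hsc).mp hAB
      exact this
    linarith
  -- measure-theoretic part
  have hae : ∀ᵐ θ ∂unifAngle, θ ∈ Set.Ioo 0 (π / 2) := by
    rw [ae_iff]
    show unifAngle {θ | θ ∉ Set.Ioo 0 (π/2)} = 0
    have : unifAngle {θ | θ ∉ Set.Ioo 0 (π/2)} =
        (ENNReal.ofReal (π / 2))⁻¹ *
          (volume.restrict (Set.Ioo 0 (π / 2))) (Set.Ioo 0 (π/2))ᶜ := by
      rfl
    rw [this, Measure.restrict_apply (measurableSet_Ioo.compl)]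
    simp
  have hcongr : mHV =ᵐ[unifAngle] (mCS ∘ f) := by
    filter_upwards [hae] with θ hθ
    exact key θ hθ
  -- f is measure preserving on unifAngle
  have hmp : MeasurePreserving f (volume.restrict (Set.Ioo 0 (π/2)))
      (volume.restrict (Set.Ioo 0 (π/2))) := by
    have h0 : MeasurePreserving f volume volume :=
      Measure.measurePreserving_sub_left volume (π/2)
    have := h0.restrict_preimage (measurableSet_Ioo (a := (0:ℝ)) (b := π/2))
    rwa [hfpre] at this
  have hmapf : Measure.map f unifAngle = unifAngle := by
    rw [unifAngle, Measure.map_smul, hmp.map_eq]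
  calc Measure.map mCS unifAngle
      = Measure.map mCS (Measure.map f unifAngle) := by rw [hmapf]
    _ = Measure.map (mCS ∘ f) unifAngle := (Measure.map_map hmCS hfmeas)
    _ = Measure.map mHV unifAngle := (Measure.map_congr hcongr).symm
end

section
/- Pareto compliance of the hypervolume indicator: if A ⊆ B ⊆ ℝ^k are finite sets with all points ≥ z, and B contains a point b that is not dominated by (nor equal to) any point of A and satisfies b > z strictly componentwise, then HV_z(B) > HV_z(A). -/
open MeasureTheory

/-- The region dominated by `S` with respect to the reference point `z`. -/
def dominatedRegion {k : ℕ} (z : Fin k → ℝ) (S : Set (Fin k → ℝ)) : Set (Fin k → ℝ) :=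
  {x | (∀ i, z i ≤ x i) ∧ ∃ s ∈ S, ∀ i, x i ≤ s i}

lemma dominatedRegion_eq {k : ℕ} (z : Fin k → ℝ) (S : Set (Fin k → ℝ)) :
    dominatedRegion z S = ⋃ s ∈ S, Set.Icc z s := by
  ext x
  simp only [dominatedRegion, Set.mem_setOf_eq, Set.mem_iUnion, Set.mem_Icc, Pi.le_def]
  tauto

theorem stmt_10 {k : ℕ} (z : Fin k → ℝ) (A B : Set (Fin k → ℝ))
    (hA : A.Finite) (hB : B.Finite) (hAB : A ⊆ B)
    (hBz : ∀ y ∈ B, ∀ i, z i ≤ y i)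
    (b : Fin k → ℝ) (hbB : b ∈ B) (hbz : ∀ i, z i < b i)
    (hbundom : ∀ a ∈ A, ∃ i, a i < b i) :
    volume (dominatedRegion z A) < volume (dominatedRegion z B) := by
  -- finiteness of the volume of the region dominated by A
  have hAfin : volume (dominatedRegion z A) < ⊤ := by
    rw [dominatedRegion_eq]
    refine measure_biUnion_lt_top hA fun a _ => ?_
    exact (isCompact_Icc).measure_lt_top
  rcases Nat.eq_zero_or_pos k with hk | hk
  · -- k = 0 : A is empty, B-region is everything
    subst hk
    have hAe : A = ∅ := by
      ext a
      simp only [Set.mem_empty_iff_false, iff_false]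
      intro ha
      obtain ⟨i, -⟩ := hbundom a ha
      exact i.elim0
    have hBu : dominatedRegion z B = Set.univ := by
      ext x
      simp only [Set.mem_univ, iff_true, dominatedRegion, Set.mem_setOf_eq]
      exact ⟨fun i => i.elim0, b, hbB, fun i => i.elim0⟩
    rw [hAe, hBu]
    have h1 : dominatedRegion z (∅ : Set (Fin 0 → ℝ)) = ∅ := by
      simp [dominatedRegion]
    rw [h1]
    simp only [measure_empty]
    have : volume (Set.univ : Set (Fin 0 → ℝ)) = 1 := by
      rw [volume_pi, Measure.pi_univ]
      simp
    rw [this]; norm_num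
  · -- k > 0
    haveI : Nonempty (Fin k) := ⟨⟨0, hk⟩⟩
    classical
    -- choose for each a a coordinate where b beats a
    set ia : (Fin k → ℝ) → Fin k := fun a =>
      if h : ∃ i, a i < b i then h.choose else Classical.arbitrary _ with hia
    have hia_spec : ∀ a ∈ A, a (ia a) < b (ia a) := by
      intro a ha
      have h : ∃ i, a i < b i := hbundom a ha
      simp only [hia, dif_pos h]
      exact h.choose_spec
    set δ : ℝ := Finset.univ.inf' Finset.univ_nonempty (fun i => b i - z i) with hδ
    have hδpos : 0 < δ := by
      rw [hδ]
      apply (Finset.lt_inf'_iff _).mpr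
      intro i _
      exact sub_pos.mpr (hbz i)
    set F : Finset ℝ := insert δ (hA.toFinset.image (fun a => b (ia a) - a (ia a))) with hF
    have hFne : F.Nonempty := ⟨δ, Finset.mem_insert_self _ _⟩
    set ε : ℝ := F.min' hFne with hε
    have hεpos : 0 < ε := by
      rw [hε]
      apply Finset.lt_min'_iff _ _ |>.mpr
      intro y hy
      rw [hF] at hy
      rcases Finset.mem_insert.mp hy with h | h
      · exact h ▸ hδpos
      · obtain ⟨a, ha, rfl⟩ := Finset.mem_image.mp h
        exact sub_pos.mpr (hia_spec a (hA.mem_toFinset.mp ha))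
    have hεδ : ε ≤ δ := Finset.min'_le _ _ (Finset.mem_insert_self _ _)
    have hεa : ∀ a ∈ A, ε ≤ b (ia a) - a (ia a) := by
      intro a ha
      exact Finset.min'_le _ _ (Finset.mem_insert_of_mem
        (Finset.mem_image.mpr ⟨a, hA.mem_toFinset.mpr ha, rfl⟩))
    set Box : Set (Fin k → ℝ) := Set.univ.pi (fun i => Set.Ioc (b i - ε) (b i)) with hBox
    have hBoxMeas : MeasurableSet Box := MeasurableSet.univ_pi fun i => measurableSet_Ioc
    have hBoxVol : volume Box ≠ 0 := by
      rw [hBox, volume_pi_pi]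
      simp only [Real.volume_Ioc, sub_sub_cancel]
      rw [Finset.prod_const]
      exact pow_ne_zero _ (by simpa using hεpos)
    -- Box is inside the B-region
    have hBoxB : Box ⊆ dominatedRegion z B := by
      intro x hx
      simp only [hBox, Set.mem_pi, Set.mem_univ, Set.mem_Ioc, forall_true_left] at hx
      refine ⟨fun i => ?_, b, hbB, fun i => (hx i).2⟩
      have h1 : z i ≤ b i - δ := by
        have := Finset.inf'_le (fun i => b i - z i) (Finset.mem_univ i)
        rw [← hδ] at this
        linarith
      have := (hx i).1
      linarith [hεδ]
    -- Box is disjoint from the A-region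
    have hdisj : Disjoint (dominatedRegion z A) Box := by
      rw [Set.disjoint_right]
      intro x hx hxA
      obtain ⟨-, a, ha, hxa⟩ := hxA
      simp only [hBox, Set.mem_pi, Set.mem_univ, Set.mem_Ioc, forall_true_left] at hx
      have h1 := (hx (ia a)).1
      have h2 := hxa (ia a)
      have h3 := hεa a ha
      linarith
    have hsub : dominatedRegion z A ∪ Box ⊆ dominatedRegion z B := by
      apply Set.union_subset _ hBoxB
      intro x hx
      obtain ⟨h1, s, hs, h2⟩ := hx
      exact ⟨h1, s, hAB hs, h2⟩
    calc volume (dominatedRegion z A)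
        < volume (dominatedRegion z A) + volume Box :=
          ENNReal.lt_add_right hAfin.ne hBoxVol
      _ = volume (dominatedRegion z A ∪ Box) := (measure_union hdisj hBoxMeas).symm
      _ ≤ volume (dominatedRegion z B) := measure_mono hsub
end

section
/- Lower bound for hypervolume regret (packing argument): let K = {y ∈ ℝ^k : y ≥ 0, ‖y‖_2 ≤ 1}, whose Pareto frontier is the positive-orthant unit sphere S_+^{k−1}. There exists a constant c_k > 0 such that for every 0 < ε < 1/2 and every finite set Y_T ⊆ K of size T < c_k (1/ε)^{k−1}, the hypervolume regret satisfies HV_0(S_+^{k−1}) − HV_0(Y_T) ≥ c_k ε. Consequently HV_0(S_+^{k−1}) − HV_0(Y_T) = Ω(T^{−1/(k−1)}) for any T-point set Y_T ⊆ K. -/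
/-!
Place a grid of `n ^ (k - 1)` points `p` on `S₊^{k-1}`, `ε`-apart in the sup norm, with
`n ≥ β / ε` and every coordinate at least `β = 1 / (2k)`, and put below each the cube
`[p - η, p]` with `η = β² ε / 2`. The cubes are disjoint and dominated by `S₊^{k-1}`.
If `y` lies in the unit ball and dominates the corner `p - η`, then `⟪y - p, p⟫ ≤ 0` gives
`β (y_j - p_j) ≤ k η` for every `j`; as `η (β + k) < β ε`, two corners dominated by the same `y`
are less than `ε` apart, so `y` dominates the corner of at most one cube. At least
`n ^ (k - 1) - T` cubes are therefore disjoint from the region dominated by `Y_T`, and each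
contributes `η ^ k` to the regret.
-/

open MeasureTheory

/-- The Euclidean (ℓ_2) norm on `ℝ^k`. -/
noncomputable def euclNorm {k : ℕ} (x : Fin k → ℝ) : ℝ :=
  Real.sqrt (∑ i, (x i) ^ 2)

/-- The region dominated by `S` with respect to the reference point `0`. -/
def dominatedRegion0 {k : ℕ} (S : Set (Fin k → ℝ)) : Set (Fin k → ℝ) :=
  {x | (∀ i, 0 ≤ x i) ∧ ∃ s ∈ S, ∀ i, x i ≤ s i}

/-- The positive-orthant part of the unit sphere, `S₊^{k-1}`. -/
def spherePlus (k : ℕ) : Set (Fin k → ℝ) :=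
  {y | euclNorm y = 1 ∧ ∀ i, 0 ≤ y i}

lemma euclNorm_le_one_iff {k : ℕ} {y : Fin k → ℝ} : euclNorm y ≤ 1 ↔ ∑ i, y i ^ 2 ≤ 1 :=
  Real.sqrt_le_one

lemma euclNorm_eq_one_iff {k : ℕ} {y : Fin k → ℝ} : euclNorm y = 1 ↔ ∑ i, y i ^ 2 = 1 :=
  Real.sqrt_eq_one

lemma le_one_of_sum_sq_eq_one {ι : Type*} [Fintype ι] {p : ι → ℝ} (hp : ∑ i, p i ^ 2 = 1)
    (i : ι) : p i ≤ 1 := by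
  have : p i ^ 2 ≤ 1 := hp ▸ Finset.single_le_sum (fun j _ => sq_nonneg (p j)) (Finset.mem_univ i)
  nlinarith

lemma mul_sub_le_of_forall_sub_le {ι : Type*} [Fintype ι] {p y : ι → ℝ} {β η : ℝ}
    (hp : ∑ i, p i ^ 2 = 1) (hy : ∑ i, y i ^ 2 ≤ 1) (hpβ : ∀ i, β ≤ p i) (hβ : 0 ≤ β)
    (hη : 0 ≤ η) (hyp : ∀ i, p i - η ≤ y i) (j : ι) :
    β * (y j - p j) ≤ η * Fintype.card ι := by
  have hp0 : ∀ i, 0 ≤ p i := fun i => hβ.trans (hpβ i)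
  -- `2 y p ≤ y² + p²` summed: `⟪y, p⟫ ≤ 1 = ⟪p, p⟫`
  have hinner : ∑ i, (y i - p i) * p i ≤ 0 := by
    have : ∑ i, (y i - p i) * p i ≤ ∑ i, (y i ^ 2 - p i ^ 2) / 2 :=
      Finset.sum_le_sum fun i _ => by nlinarith [sq_nonneg (y i - p i)]
    rw [← Finset.sum_div, Finset.sum_sub_distrib, hp] at this
    linarith
  have hsum : ∑ i, p i ≤ Fintype.card ι := by
    simpa using Finset.sum_le_sum fun i (_ : i ∈ Finset.univ) => le_one_of_sum_sq_eq_one hp i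
  have hj : (y j - p j) * p j + η * p j ≤ ∑ i, ((y i - p i) * p i + η * p i) :=
    Finset.single_le_sum (f := fun i => (y i - p i) * p i + η * p i)
      (fun i _ => by nlinarith [mul_nonneg (sub_nonneg.2 (hyp i)) (hp0 i)]) (Finset.mem_univ j)
  rw [Finset.sum_add_distrib, ← Finset.mul_sum] at hj
  rcases le_or_gt (y j) (p j) with h | h
  · nlinarith [hp0 j]
  · nlinarith [hpβ j, hp0 j]

lemma dominatedRegion0_finset {k : ℕ} (Y : Finset (Fin k → ℝ)) :
    dominatedRegion0 (Y : Set (Fin k → ℝ)) = ⋃ y ∈ Y, Set.Icc 0 y := by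
  ext x
  simp only [dominatedRegion0, Set.mem_ofPred_eq, Set.mem_iUnion, Set.mem_Icc, Pi.le_def,
    Finset.mem_coe, exists_prop]
  constructor
  · rintro ⟨hx, y, hy, hxy⟩
    exact ⟨y, hy, hx, hxy⟩
  · rintro ⟨y, hy, hx, hxy⟩
    exact ⟨hx, y, hy, hxy⟩

lemma dominatedRegion0_mono {k : ℕ} {S T : Set (Fin k → ℝ)}
    (h : ∀ s ∈ S, ∃ t ∈ T, s ≤ t) : dominatedRegion0 S ⊆ dominatedRegion0 T := by
  rintro x ⟨hx, s, hs, hxs⟩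
  obtain ⟨t, ht, hst⟩ := h s hs
  exact ⟨hx, t, ht, fun i => (hxs i).trans (hst i)⟩

lemma dominatedRegion0_spherePlus_subset_Icc (k : ℕ) :
    dominatedRegion0 (spherePlus k) ⊆ Set.Icc 0 1 := by
  rintro x ⟨hx, s, ⟨hs, -⟩, hxs⟩
  exact ⟨hx, fun i => (hxs i).trans (le_one_of_sum_sq_eq_one (euclNorm_eq_one_iff.1 hs) i)⟩

lemma volume_dominatedRegion0_spherePlus_ne_top (k : ℕ) :
    volume (dominatedRegion0 (spherePlus k)) ≠ ⊤ :=
  measure_ne_top_of_subset (dominatedRegion0_spherePlus_subset_Icc k)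
    (by simp [Real.volume_Icc_pi])

noncomputable def sphereLift {m : ℕ} (a : Fin m → ℝ) : Fin (m + 1) → ℝ :=
  Fin.snoc a √(1 - ∑ i, a i ^ 2)

section sphereLift

variable {m : ℕ} {a : Fin m → ℝ}

@[simp] lemma sphereLift_castSucc (i : Fin m) : sphereLift a i.castSucc = a i := by
  simp [sphereLift]

@[simp] lemma sphereLift_last : sphereLift a (Fin.last m) = √(1 - ∑ i, a i ^ 2) := by
  simp [sphereLift]

lemma sum_sq_sphereLift (ha : ∑ i, a i ^ 2 ≤ 1) : ∑ i, sphereLift a i ^ 2 = 1 := by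
  rw [Fin.sum_univ_castSucc]
  simp only [sphereLift_castSucc, sphereLift_last]
  rw [Real.sq_sqrt (by linarith)]
  ring

lemma sphereLift_mem_spherePlus (ha0 : ∀ i, 0 ≤ a i) (ha : ∑ i, a i ^ 2 ≤ 1) :
    sphereLift a ∈ spherePlus (m + 1) := by
  refine ⟨euclNorm_eq_one_iff.2 (sum_sq_sphereLift ha), Fin.lastCases ?_ fun i => ?_⟩
  · simp [Real.sqrt_nonneg]
  · simpa using ha0 i

lemma le_sphereLift_init {y : Fin (m + 1) → ℝ} (hy : ∑ i, y i ^ 2 ≤ 1) :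
    y ≤ sphereLift (Fin.init y) := by
  refine Fin.lastCases ?_ fun i => by simp [Fin.init]
  rw [Fin.sum_univ_castSucc] at hy
  simp only [sphereLift_last, Fin.init]
  exact Real.le_sqrt_of_sq_le (by linarith)

end sphereLift

lemma dominatedRegion0_subset_spherePlus {m : ℕ} {Y : Set (Fin (m + 1) → ℝ)}
    (hY : Y ⊆ {y | (∀ i, 0 ≤ y i) ∧ euclNorm y ≤ 1}) :
    dominatedRegion0 Y ⊆ dominatedRegion0 (spherePlus (m + 1)) := by
  refine dominatedRegion0_mono fun y hy => ?_
  obtain ⟨hy0, hy1⟩ := hY hy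
  rw [euclNorm_le_one_iff] at hy1
  have hinit : ∑ i, Fin.init y i ^ 2 ≤ 1 := by
    rw [Fin.sum_univ_castSucc] at hy1
    simp only [Fin.init]
    linarith [sq_nonneg (y (Fin.last m))]
  exact ⟨_, sphereLift_mem_spherePlus (fun i => hy0 _) hinit, le_sphereLift_init hy1⟩

lemma disjoint_Icc_sub_const {ι : Type*} {a b : ι → ℝ} {η : ℝ} {i : ι} (h : η < |a i - b i|) :
    Disjoint (Set.Icc (fun j => a j - η) a) (Set.Icc (fun j => b j - η) b) := by
  refine Set.disjoint_left.2 fun x ⟨hxa, hax⟩ ⟨hxb, hbx⟩ => ?_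
  have := hxa i; have := hax i; have := hxb i; have := hbx i
  rcases abs_cases (a i - b i) with ⟨hab, -⟩ | ⟨hab, -⟩ <;> simp_all <;> linarith

lemma volume_real_Icc_sub_const {ι : Type*} [Fintype ι] (a : ι → ℝ) {η : ℝ} (hη : 0 ≤ η) :
    volume.real (Set.Icc (fun i => a i - η) a) = η ^ Fintype.card ι := by
  simp [measureReal_def, Real.volume_Icc_pi, hη]

lemma Icc_sub_const_subset_dominatedRegion0_diff {k : ℕ} {S Y : Set (Fin k → ℝ)}
    {p : Fin k → ℝ} {η : ℝ} (hpS : p ∈ S) (hηp : ∀ i, η ≤ p i)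
    (hY : ∀ y ∈ Y, ¬ ∀ i, p i - η ≤ y i) :
    Set.Icc (fun i => p i - η) p ⊆ dominatedRegion0 S \ dominatedRegion0 Y := by
  rintro x ⟨hxl, hxu⟩
  refine ⟨⟨fun i => by linarith [hxl i, hηp i], p, hpS, hxu⟩, ?_⟩
  rintro ⟨-, y, hy, hxy⟩
  exact hY y hy fun i => (hxl i).trans (hxy i)

lemma eq_of_forall_sub_le_of_forall_sub_le {ι V : Type*} [Fintype ι] {p : V → ι → ℝ} {β ε η : ℝ}
    (hp : ∀ v, ∑ i, p v i ^ 2 = 1) (hpβ : ∀ v i, β ≤ p v i) (hβ : 0 ≤ β) (hη : 0 ≤ η)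
    (hηε : η * (β + Fintype.card ι) < β * ε) (hsep : ∀ v v', v ≠ v' → ∃ i, ε ≤ |p v i - p v' i|)
    {y : ι → ℝ} (hy : ∑ i, y i ^ 2 ≤ 1) {v v' : V}
    (hv : ∀ i, p v i - η ≤ y i) (hv' : ∀ i, p v' i - η ≤ y i) : v = v' := by
  by_contra hne
  obtain ⟨i, hi⟩ := hsep v v' hne
  have h := mul_sub_le_of_forall_sub_le (hp v) hy (hpβ v) hβ hη hv i
  have h' := mul_sub_le_of_forall_sub_le (hp v') hy (hpβ v') hβ hη hv' i
  have hβε := mul_le_mul_of_nonneg_left hi hβ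
  have := mul_le_mul_of_nonneg_left (hv i) hβ
  have := mul_le_mul_of_nonneg_left (hv' i) hβ
  rcases abs_cases (p v i - p v' i) with ⟨habs, -⟩ | ⟨habs, -⟩ <;> rw [habs] at hβε <;> linarith

theorem card_sub_card_mul_pow_le_regret_of_separated {m : ℕ} {V : Type*} [Fintype V]
    {p : V → Fin (m + 1) → ℝ} {β ε η : ℝ}
    (hpS : ∀ v, p v ∈ spherePlus (m + 1)) (hpβ : ∀ v i, β ≤ p v i) (hη : 0 < η) (hηβ : η ≤ β)
    (hηε : η * (β + (m + 1)) < β * ε) (hsep : ∀ v v', v ≠ v' → ∃ i, ε ≤ |p v i - p v' i|)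
    (YT : Finset (Fin (m + 1) → ℝ))
    (hYT : (YT : Set (Fin (m + 1) → ℝ)) ⊆ {y | (∀ i, 0 ≤ y i) ∧ euclNorm y ≤ 1}) :
    ((Fintype.card V : ℝ) - YT.card) * η ^ (m + 1) ≤
      (volume (dominatedRegion0 (spherePlus (m + 1)))).toReal -
        (volume (dominatedRegion0 (YT : Set (Fin (m + 1) → ℝ)))).toReal := by
  classical
  have hp : ∀ v, ∑ i, p v i ^ 2 = 1 := fun v => euclNorm_eq_one_iff.1 (hpS v).1
  have hβ : 0 ≤ β := hη.le.trans hηβ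
  have hηε' : η < ε := by nlinarith
  let box v : Set (Fin (m + 1) → ℝ) := Set.Icc (fun i => p v i - η) (p v)
  let covered := Finset.univ.filter fun v => ∃ y ∈ YT, ∀ i, p v i - η ≤ y i
  have hcovered : covered.card ≤ YT.card :=
    Finset.card_le_card_of_forall_subsingleton (fun v y => ∀ i, p v i - η ≤ y i)
      (fun v hv => (Finset.mem_filter.1 hv).2)
      (fun y hy v hv v' hv' => eq_of_forall_sub_le_of_forall_sub_le hp hpβ hβ hη.le
        (by simpa using hηε) hsep (euclNorm_le_one_iff.1 (hYT hy).2) hv.2 hv'.2)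
  have hfree : (Fintype.card V : ℝ) - YT.card ≤ coveredᶜ.card := by
    have : (covered.card : ℝ) + coveredᶜ.card = Fintype.card V := by
      exact_mod_cast Finset.card_add_card_compl covered
    have : (covered.card : ℝ) ≤ YT.card := by exact_mod_cast hcovered
    linarith
  have hsub : ⋃ v ∈ coveredᶜ, box v ⊆
      dominatedRegion0 (spherePlus (m + 1)) \ dominatedRegion0 (YT : Set (Fin (m + 1) → ℝ)) := by
    refine Set.iUnion₂_subset fun v hv => Icc_sub_const_subset_dominatedRegion0_diff (hpS v)
      (fun i => hηβ.trans (hpβ v i)) fun y hy hyv => ?_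
    exact Finset.mem_compl.1 hv (Finset.mem_filter.2 ⟨Finset.mem_univ v, y, hy, hyv⟩)
  have hdisj : Set.PairwiseDisjoint ((coveredᶜ : Finset V) : Set V) box := fun v _ v' _ hne =>
    have ⟨i, hi⟩ := hsep v v' hne
    disjoint_Icc_sub_const (hηε'.trans_le hi)
  calc ((Fintype.card V : ℝ) - YT.card) * η ^ (m + 1)
      ≤ coveredᶜ.card * η ^ (m + 1) := by gcongr
    _ = volume.real (⋃ v ∈ coveredᶜ, box v) := by
      rw [measureReal_biUnion_finset hdisj (fun _ _ => measurableSet_Icc)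
        fun _ _ => measure_Icc_lt_top.ne]
      simp [box, volume_real_Icc_sub_const _ hη.le]
    _ ≤ volume.real (dominatedRegion0 (spherePlus (m + 1)) \ dominatedRegion0 (YT : Set _)) :=
      measureReal_mono hsub (measure_ne_top_of_subset Set.sdiff_subset
        (volume_dominatedRegion0_spherePlus_ne_top _))
    _ = _ := by
      rw [measureReal_sdiff (dominatedRegion0_subset_spherePlus hYT)
        (by rw [dominatedRegion0_finset]; exact YT.measurableSet_biUnion fun _ _ =>
          measurableSet_Icc)
        (volume_dominatedRegion0_spherePlus_ne_top _)]
      rfl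

noncomputable def gridPoint {m n : ℕ} (β ε : ℝ) (v : Fin m → Fin n) : Fin (m + 1) → ℝ :=
  sphereLift fun i => β + (v i : ℕ) * ε

section gridPoint

variable {m n : ℕ} {β ε : ℝ}

lemma sum_sq_grid_le (hβ : 0 ≤ β) (hε : 0 ≤ ε) (hn : ((n : ℝ) - 1) * ε ≤ β)
    (v : Fin m → Fin n) : ∑ i, (β + (v i : ℕ) * ε) ^ 2 ≤ m * (2 * β) ^ 2 := by
  calc ∑ i, (β + (v i : ℕ) * ε) ^ 2 ≤ ∑ _i : Fin m, (2 * β) ^ 2 := by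
        refine Finset.sum_le_sum fun i _ => pow_le_pow_left₀ (by positivity) ?_ 2
        have : ((v i : ℕ) : ℝ) + 1 ≤ n := by exact_mod_cast (v i).isLt
        nlinarith
    _ = m * (2 * β) ^ 2 := by simp

lemma gridPoint_mem_spherePlus (hβ : 0 ≤ β) (hε : 0 ≤ ε) (hn : ((n : ℝ) - 1) * ε ≤ β)
    (hβ1 : m * (2 * β) ^ 2 ≤ 1) (v : Fin m → Fin n) : gridPoint β ε v ∈ spherePlus (m + 1) :=
  sphereLift_mem_spherePlus (fun _ => by positivity) (by nlinarith [sum_sq_grid_le hβ hε hn v])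

lemma le_gridPoint (hβ : 0 ≤ β) (hε : 0 ≤ ε) (hn : ((n : ℝ) - 1) * ε ≤ β)
    (hβ1 : m * (2 * β) ^ 2 + β ^ 2 ≤ 1) (v : Fin m → Fin n) (i : Fin (m + 1)) :
    β ≤ gridPoint β ε v i := by
  induction i using Fin.lastCases with
  | last =>
    rw [gridPoint, sphereLift_last, Real.le_sqrt hβ (by nlinarith [sum_sq_grid_le hβ hε hn v])]
    linarith [sum_sq_grid_le hβ hε hn v]
  | cast i => simp only [gridPoint, sphereLift_castSucc]; nlinarith

end gridPoint

lemma exists_le_abs_gridPoint_sub {m n : ℕ} (β : ℝ) {ε : ℝ} (hε : 0 ≤ ε) {v v' : Fin m → Fin n}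
    (h : v ≠ v') : ∃ i, ε ≤ |gridPoint β ε v i - gridPoint β ε v' i| := by
  obtain ⟨i, hi⟩ := Function.ne_iff.1 h
  refine ⟨i.castSucc, ?_⟩
  have hne : ((v i : ℕ) : ℤ) - (v' i : ℕ) ≠ 0 :=
    sub_ne_zero.2 (by exact_mod_cast Fin.val_ne_of_ne hi)
  have : (1 : ℝ) ≤ |((v i : ℕ) : ℝ) - (v' i : ℕ)| := by exact_mod_cast Int.one_le_abs hne
  simp only [gridPoint, sphereLift_castSucc, add_sub_add_left_eq_sub, ← sub_mul, abs_mul,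
    abs_of_nonneg hε]
  nlinarith

lemma pow_sub_card_mul_pow_le_regret {m n : ℕ} {β ε : ℝ} (hβm : β * (m + 1) = 1 / 2)
    (hε : 0 < ε) (hε2 : ε < 1 / 2) (hn : ((n : ℝ) - 1) * ε ≤ β) (YT : Finset (Fin (m + 1) → ℝ))
    (hYT : (YT : Set (Fin (m + 1) → ℝ)) ⊆ {y | (∀ i, 0 ≤ y i) ∧ euclNorm y ≤ 1}) :
    ((n : ℝ) ^ m - YT.card) * (β ^ 2 / 2 * ε) ^ (m + 1) ≤
      (volume (dominatedRegion0 (spherePlus (m + 1)))).toReal -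
        (volume (dominatedRegion0 (YT : Set (Fin (m + 1) → ℝ)))).toReal := by
  have hβ : 0 < β := by nlinarith
  have hβ2 : β ≤ 1 / 2 := by nlinarith
  have hβ1 : m * (2 * β) ^ 2 + β ^ 2 ≤ 1 := by nlinarith
  have hηε : β ^ 2 / 2 * ε * (β + (m + 1)) < β * ε := by
    have : β ^ 2 / 2 * ε * (β + (m + 1)) = β * ε * (β ^ 2 + 1 / 2) / 2 := by
      rw [← hβm]; ring
    nlinarith [mul_pos hβ hε]
  have := card_sub_card_mul_pow_le_regret_of_separated
    (gridPoint_mem_spherePlus hβ.le hε.le hn (by nlinarith)) (le_gridPoint hβ.le hε.le hn hβ1)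
    (by positivity) (by nlinarith) hηε (fun _ _ => exists_le_abs_gridPoint_sub β hε.le) YT hYT
  rwa [Fintype.card_fun, Fintype.card_fin, Fintype.card_fin, Nat.cast_pow] at this

lemma exists_nat_sub_one_mul_le_and_div_le {β ε : ℝ} (hβ : 0 ≤ β) (hε : 0 < ε) :
    ∃ n : ℕ, ((n : ℝ) - 1) * ε ≤ β ∧ β / ε ≤ n := by
  refine ⟨⌊β / ε⌋₊ + 1, ?_, (Nat.lt_floor_add_one _).le.trans (by push_cast; rfl)⟩
  push_cast
  rw [add_sub_cancel_right, ← le_div_iff₀ hε]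
  exact Nat.floor_le (by positivity)

theorem stmt_12 {k : ℕ} (hk : 0 < k) :
    ∃ c : ℝ, 0 < c ∧
      ∀ ε : ℝ, 0 < ε → ε < 1 / 2 →
        ∀ YT : Finset (Fin k → ℝ),
          (↑YT : Set (Fin k → ℝ)) ⊆ {y | (∀ i, 0 ≤ y i) ∧ euclNorm y ≤ 1} →
          (YT.card : ℝ) < c * (1 / ε) ^ (k - 1) →
          (volume (dominatedRegion0 (spherePlus k))).toReal -
              (volume (dominatedRegion0 (↑YT : Set (Fin k → ℝ)))).toReal ≥ c * ε := by
  obtain ⟨m, rfl⟩ : ∃ m, k = m + 1 := ⟨k - 1, by omega⟩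
  set β : ℝ := 1 / (2 * (m + 1))
  have hβ : 0 < β := by positivity
  have hβm : β * (m + 1) = 1 / 2 := by simp only [β]; field_simp
  set c := β ^ m * (β ^ 2 / 2) ^ (m + 1) / 2
  have hc : c ≤ β ^ m / 2 := by
    have : (β ^ 2 / 2) ^ (m + 1) ≤ 1 := pow_le_one₀ (by positivity) (by nlinarith)
    have := mul_le_mul_of_nonneg_left this (pow_nonneg hβ.le m)
    simp only [c]
    linarith
  refine ⟨c, by positivity, fun ε hε hε2 YT hYT hT => ?_⟩
  rw [Nat.add_sub_cancel] at hT
  obtain ⟨n, hn, hnε⟩ := exists_nat_sub_one_mul_le_and_div_le hβ.le hε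
  have hn' : β ^ m * (1 / ε) ^ m ≤ n ^ m := by
    rw [← mul_pow, ← div_eq_mul_one_div]
    exact pow_le_pow_left₀ (by positivity) hnε m
  have hcε := mul_le_mul_of_nonneg_right hc (by positivity : (0 : ℝ) ≤ (1 / ε) ^ m)
  have hεpow : (1 / ε) ^ m * ε ^ (m + 1) = ε := by
    rw [pow_succ, ← mul_assoc, ← mul_pow, one_div_mul_cancel hε.ne', one_pow, one_mul]
  calc c * ε = β ^ m / 2 * (β ^ 2 / 2) ^ (m + 1) * ((1 / ε) ^ m * ε ^ (m + 1)) := by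
        rw [hεpow]; ring
    _ = β ^ m / 2 * (1 / ε) ^ m * (β ^ 2 / 2 * ε) ^ (m + 1) := by ring
    _ ≤ (n ^ m - YT.card) * (β ^ 2 / 2 * ε) ^ (m + 1) := by gcongr; linarith
    _ ≤ _ := pow_sub_card_mul_pow_le_regret hβm hε hε2 hn YT hYT
end

section
/- Undominated box lemma: let p ∈ S_+^{k−1} (so ‖p‖_2 = 1, p > 0) with 1/k < p_i for all i, let 0 < ε' < 1, and let y ∈ ℝ^k with ‖y‖_2 ≤ 1 and ‖y − p‖_∞ > ε'. Then y does not dominate p − (ε'/k²)·𝟙, i.e., it is not the case that y ≥ p − (ε'/k²)·𝟙 componentwise. -/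
theorem stmt_13 {k : ℕ} (hk : 0 < k) (p : Fin k → ℝ)
    (hpnorm : euclNorm p = 1) (hppos : ∀ i, 0 < p i)
    (hplarge : ∀ i, 1 / (k : ℝ) < p i)
    (ε' : ℝ) (hε0 : 0 < ε') (hε1 : ε' < 1)
    (y : Fin k → ℝ) (hy : euclNorm y ≤ 1)
    (hfar : ∃ i, ε' < |y i - p i|) :
    ¬ ∀ i, p i - ε' / (k : ℝ) ^ 2 ≤ y i := by
  intro h
  obtain ⟨j, hj⟩ := hfar
  have hk1 : (1:ℝ) ≤ (k:ℝ) := by exact_mod_cast hk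
  have hkpos : (0:ℝ) < (k:ℝ) := by linarith
  obtain ⟨δ, hδ⟩ : ∃ δ : ℝ, δ = ε' / (k:ℝ)^2 := ⟨_, rfl⟩
  simp only [← hδ] at h
  have hδpos : 0 < δ := by rw [hδ]; positivity
  have hδk : δ * (k:ℝ)^2 = ε' := by
    rw [hδ]; field_simp
  have hk2 : (1:ℝ) ≤ (k:ℝ)^2 := by nlinarith
  have hδle : δ ≤ ε' := by nlinarith [mul_le_mul_of_nonneg_left hk2 hδpos.le]
  -- sum of squares of p equals 1
  have hsq : ∑ i, (p i)^2 = 1 := by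
    have h2 : (0:ℝ) ≤ ∑ i, (p i)^2 := by positivity
    have h1 : Real.sqrt (∑ i, (p i)^2) = 1 := hpnorm
    nlinarith [Real.sq_sqrt h2, h1]
  have hp1 : ∀ i, p i ≤ 1 := by
    intro i
    have h1 := Finset.single_le_sum (f := fun i => (p i)^2)
      (fun i _ => by positivity) (Finset.mem_univ i)
    nlinarith [(hppos i).le, h1, hsq]
  have hpsum : ∑ i, p i ≤ (k:ℝ) := by
    calc ∑ i, p i ≤ ∑ _i : Fin k, (1:ℝ) := Finset.sum_le_sum (fun i _ => hp1 i)
    _ = k := by simp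
  have hpsum0 : 0 ≤ ∑ i, p i := Finset.sum_nonneg (fun i _ => (hppos i).le)
  -- the far coordinate must be above
  have hyj : p j + ε' ≤ y j := by
    rcases lt_abs.mp hj with h1 | h1
    · linarith
    · exfalso; have := h j; linarith
  -- componentwise lower bounds
  have hnn : ∀ i, 0 ≤ p i - δ := by
    intro i
    have hpi := hplarge i
    have : δ ≤ 1 / (k:ℝ) := by
      rw [hδ, div_le_div_iff₀ (by positivity) hkpos]
      nlinarith
    linarith
  have hterm : ∀ i, (p i - δ)^2 ≤ (y i)^2 := by
    intro i
    have h1 := h i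
    have h2 := hnn i
    nlinarith
  -- split off coordinate j
  have split_y := Finset.sum_erase_add Finset.univ (fun i => (y i)^2) (Finset.mem_univ j)
  have split_p := Finset.sum_erase_add Finset.univ (fun i => (p i - δ)^2) (Finset.mem_univ j)
  have herase : ∑ i ∈ Finset.univ.erase j, (p i - δ)^2 ≤ ∑ i ∈ Finset.univ.erase j, (y i)^2 :=
    Finset.sum_le_sum (fun i _ => hterm i)
  have hyj2 : (p j + ε')^2 ≤ (y j)^2 := by nlinarith [hppos j]
  have hbig : ∑ i, (p i - δ)^2 - (p j - δ)^2 + (p j + ε')^2 ≤ ∑ i, (y i)^2 := by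
    linarith
  -- expand the sum of (p i - δ)^2
  have hexp : ∑ i, (p i - δ)^2 = ∑ i, (p i)^2 - 2*δ*(∑ i, p i) + (k:ℝ)*δ^2 := by
    have : ∀ i ∈ Finset.univ, (p i - δ)^2 = (p i)^2 - 2*δ*(p i) + δ^2 := fun i _ => by ring
    rw [Finset.sum_congr rfl this]
    rw [Finset.sum_add_distrib, Finset.sum_sub_distrib, ← Finset.mul_sum]
    simp [Finset.sum_const, Finset.card_univ, nsmul_eq_mul]
  -- conclude sum y^2 > 1
  have hpj := hplarge j
  have hpjk : ε' / (k:ℝ) < ε' * p j := by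
    have := mul_lt_mul_of_pos_left hpj hε0
    calc ε' / (k:ℝ) = ε' * (1 / (k:ℝ)) := by ring
    _ < ε' * p j := this
  have hδsum : δ * (∑ i, p i) ≤ ε' / (k:ℝ) := by
    have h1 : δ * (∑ i, p i) ≤ δ * (k:ℝ) := mul_le_mul_of_nonneg_left hpsum hδpos.le
    have h2 : δ * (k:ℝ) = ε' / (k:ℝ) := by
      rw [eq_div_iff (ne_of_gt hkpos)]
      linear_combination hδk
    linarith
  have hexpand : (p j + ε')^2 - (p j - δ)^2 = 2*ε'*(p j) + 2*δ*(p j) + ε'^2 - δ^2 := by ring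
  have hkδ : δ^2 ≤ (k:ℝ)*δ^2 := by
    have h1 := mul_le_mul_of_nonneg_right hk1 (sq_nonneg δ)
    linarith
  have hδpj : 0 < δ * p j := mul_pos hδpos (hppos j)
  have hε2 : 0 < ε'^2 := by positivity
  have hfinal : 1 < ∑ i, (y i)^2 := by
    rw [hexp, hsq] at hbig
    linarith [hbig, hexpand, hkδ, hδpj, hε2, hδsum, hpjk]
  -- contradiction with euclNorm y ≤ 1
  have hynn : (0:ℝ) ≤ ∑ i, (y i)^2 := by positivity
  have : ∑ i, (y i)^2 ≤ 1 := by
    unfold euclNorm at hy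
    have h2 := Real.sqrt_nonneg (∑ i, (y i)^2)
    have h3 : Real.sqrt (∑ i, (y i)^2) * Real.sqrt (∑ i, (y i)^2) ≤ 1 :=
      mul_le_one₀ hy h2 hy
    rwa [Real.mul_self_sqrt hynn] at h3
  linarith
end
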